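/- Deterministic C² Itô formula via regularization: let X : [0,T] → ℝ be continuous with finite quadratic variation [X,X], and f ∈ C²(ℝ). Then the forward integral ∫₀ᵗ f'(X) d⁻X exists for all t and f(X_t) = f(X₀) + ∫₀ᵗ f'(X) d⁻X + (1/2)∫₀ᵗ f''(X_s) d[X,X]_s. -/

import Mathlib

open MeasureTheory Filter Set

/-- `f` is extended constantly outside `[0,T]`. -/
def ExtConst (T : ℝ) (f : ℝ → ℝ) : Prop :=
  (∀ t ≤ (0:ℝ), f t = f 0) ∧ ∀ t, T ≤ t → f t = f T

/-- The `ε`-covariation `C(ε,U,V)(t)`. -/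
noncomputable def Ccov (ε : ℝ) (U V : ℝ → ℝ) (t : ℝ) : ℝ :=
  ∫ s in (0:ℝ)..t, (U (s + ε) - U s) * (V (s + ε) - V s) / ε

open scoped Topology ENNReal

/-! Write `ΔX = X (s + ε) - X s` and expand `f` to second order at `X s`:
`f' (X s) ΔX / ε = (f (X (s + ε)) - f (X s)) / ε - f'' (X s) / 2 · ΔX² / ε - R / ε`.
The first term integrates to `f (X t) - f (X 0)` up to two averages over intervals of length `ε`.
For the second, the measures `ΔX² / ε ds` have distribution functions converging uniformly to
`[X,X]`; comparing both integrals of the continuous `f'' ∘ X` with Riemann–Stieltjes sums on one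
fine partition gives uniform convergence. The remainder is `o(ΔX²)` uniformly, by uniform
continuity of `f''` on the compact range of `X`, while `∫ ΔX² / ε` stays bounded. -/

theorem tendstoUniformlyOn_intervalAverage {g : ℝ → ℝ} (hg : Continuous g) (a b : ℝ) :
    TendstoUniformlyOn (fun ε t => (∫ s in t..t + ε, g s) / ε) g (𝓝[>] 0) (Icc a b) := by
  rw [Metric.tendstoUniformlyOn_iff]
  intro δ hδ
  obtain ⟨η, hη, hmod⟩ := Metric.uniformContinuousOn_iff.mp
    ((isCompact_Icc (a := a) (b := b + 1)).uniformContinuousOn_of_continuous hg.continuousOn)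
    (δ / 2) (half_pos hδ)
  filter_upwards [Ioo_mem_nhdsGT (lt_min hη one_pos)] with ε ⟨hε, hεη⟩ t ht
  have hclose : ∀ s ∈ uIoc t (t + ε), ‖g s - g t‖ ≤ δ / 2 := by
    intro s hs
    rw [uIoc_of_le (by linarith)] at hs
    have hε1 := hεη.trans_le (min_le_right _ _)
    refine (hmod s ⟨by linarith [ht.1, hs.1], by linarith [ht.2, hs.2]⟩ t
      ⟨ht.1, by linarith [ht.2]⟩ ?_).le
    rw [Real.dist_eq, abs_of_pos (by linarith [hs.1])]
    linarith [hs.2, hεη.trans_le (min_le_left _ _)]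
  have hint := intervalIntegral.norm_integral_le_of_norm_le_const hclose
  rw [intervalIntegral.integral_sub (hg.intervalIntegrable _ _) intervalIntegrable_const,
    intervalIntegral.integral_const, add_sub_cancel_left, smul_eq_mul, Real.norm_eq_abs,
    abs_of_pos hε] at hint
  rw [Real.dist_eq, ← abs_neg, neg_sub, div_sub' hε.ne', abs_div, abs_of_pos hε,
    div_lt_iff₀ hε]
  linarith [mul_pos hδ hε]

theorem integral_forwardDifference_eq {g : ℝ → ℝ} (hg : Continuous g) (a t ε : ℝ) :
    ∫ s in a..t, (g (s + ε) - g s) = (∫ s in t..t + ε, g s) - ∫ s in a..a + ε, g s := by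
  have hi : ∀ p q : ℝ, IntervalIntegrable g volume p q := fun p q => hg.intervalIntegrable p q
  rw [intervalIntegral.integral_sub (f := fun s => g (s + ε))
    ((hg.comp (continuous_add_const ε)).intervalIntegrable _ _)
    (hi _ _), intervalIntegral.integral_comp_add_right (fun s => g s)]
  have h₁ := intervalIntegral.integral_add_adjacent_intervals (hi a (a + ε)) (hi (a + ε) (t + ε))
  have h₂ := intervalIntegral.integral_add_adjacent_intervals (hi a t) (hi t (t + ε))
  linarith

theorem tendstoUniformlyOn_integral_forwardDifference_div {g : ℝ → ℝ} (hg : Continuous g)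
    (a b : ℝ) :
    TendstoUniformlyOn (fun ε t => ∫ s in a..t, (g (s + ε) - g s) / ε) (fun t => g t - g a)
      (𝓝[>] 0) (Icc a b) := by
  have hleft : TendstoUniformlyOn (fun ε (_ : ℝ) => (∫ s in a..a + ε, g s) / ε) (fun _ => g a)
      (𝓝[>] 0) (Icc a b) :=
    ((tendstoUniformlyOn_singleton_iff_tendsto.mp
      (by simpa using tendstoUniformlyOn_intervalAverage hg a a))).tendstoUniformlyOn_const _
  refine ((tendstoUniformlyOn_intervalAverage hg a b).sub hleft).congr
    (Eventually.of_forall fun ε t _ => ?_)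
  simp only [Pi.sub_apply]
  rw [intervalIntegral.integral_div, integral_forwardDifference_eq hg, sub_div]

theorem setIntegral_Ioc_eq_sum {μ : Measure ℝ} [IsLocallyFiniteMeasure μ] {h : ℝ → ℝ}
    (hh : Continuous h) {b : ℕ → ℝ} (hb : Monotone b) (n : ℕ) :
    ∫ s in Ioc (b 0) (b n), h s ∂μ
      = ∑ i ∈ Finset.range n, ∫ s in Ioc (b i) (b (i + 1)), h s ∂μ := by
  rw [← intervalIntegral.integral_of_le (hb (Nat.zero_le n)),
    ← intervalIntegral.sum_integral_adjacent_intervals fun _ _ => hh.intervalIntegrable _ _]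
  exact Finset.sum_congr rfl fun i _ => intervalIntegral.integral_of_le (hb i.le_succ)

theorem measureReal_Ioc_eq_sum {μ : Measure ℝ} [IsLocallyFiniteMeasure μ] {b : ℕ → ℝ}
    (hb : Monotone b) (n : ℕ) :
    μ.real (Ioc (b 0) (b n)) = ∑ i ∈ Finset.range n, μ.real (Ioc (b i) (b (i + 1))) := by
  simpa using setIntegral_Ioc_eq_sum (μ := μ) continuous_const hb n (h := fun _ => (1 : ℝ))

theorem measureReal_Ioc_eq_sub (μ : Measure ℝ) [IsLocallyFiniteMeasure μ] {a x y : ℝ}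
    (hax : a ≤ x) (hxy : x ≤ y) : μ.real (Ioc x y) = μ.real (Ioc a y) - μ.real (Ioc a x) := by
  rw [← Ioc_union_Ioc_eq_Ioc hax hxy,
    measureReal_union (Ioc_disjoint_Ioc_of_le le_rfl) measurableSet_Ioc measure_Ioc_lt_top.ne
      measure_Ioc_lt_top.ne]
  ring

theorem abs_setIntegral_sub_mul_measureReal_le {α : Type*} [MeasurableSpace α] {μ : Measure α}
    {s : Set α} (hs : μ s < ∞) {h : α → ℝ} (hh : IntegrableOn h s μ) {c ω : ℝ}
    (hω : ∀ x ∈ s, |h x - c| ≤ ω) : |∫ x in s, h x ∂μ - c * μ.real s| ≤ ω * μ.real s := by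
  rw [mul_comm c, ← smul_eq_mul, ← setIntegral_const, ← integral_sub hh (integrableOn_const hs.ne)]
  exact norm_setIntegral_le_of_norm_le_const (f := fun x => h x - c) hs hω

theorem abs_setIntegral_Ioc_sub_sum_le {μ : Measure ℝ} [IsLocallyFiniteMeasure μ] {h : ℝ → ℝ}
    (hh : Continuous h) {b : ℕ → ℝ} (hb : Monotone b) {n : ℕ} {ω : ℝ}
    (hω : ∀ i < n, ∀ s ∈ Ioc (b i) (b (i + 1)), |h s - h (b i)| ≤ ω) :
    |∫ s in Ioc (b 0) (b n), h s ∂μ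
        - ∑ i ∈ Finset.range n, h (b i) * μ.real (Ioc (b i) (b (i + 1)))|
      ≤ ω * μ.real (Ioc (b 0) (b n)) := by
  rw [setIntegral_Ioc_eq_sum hh hb, measureReal_Ioc_eq_sum hb, Finset.mul_sum,
    ← Finset.sum_sub_distrib]
  refine (Finset.abs_sum_le_sum_abs _ _).trans (Finset.sum_le_sum fun i hi => ?_)
  exact abs_setIntegral_sub_mul_measureReal_le measure_Ioc_lt_top
    (hh.integrableOn_Icc.mono_set Ioc_subset_Icc_self) (hω i (Finset.mem_range.mp hi))

theorem abs_sum_mul_sub_sub_sum_mul_sub_le {c u v : ℕ → ℝ} {n : ℕ} {M η : ℝ}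
    (hc : ∀ i < n, |c i| ≤ M) (huv : ∀ i ≤ n, |u i - v i| ≤ η) :
    |∑ i ∈ Finset.range n, c i * (u (i + 1) - u i) - ∑ i ∈ Finset.range n, c i * (v (i + 1) - v i)|
      ≤ n * (M * (2 * η)) := by
  have hterm : ∀ i ∈ Finset.range n,
      |c i * (u (i + 1) - u i) - c i * (v (i + 1) - v i)| ≤ M * (2 * η) := by
    intro i hi
    have hi := Finset.mem_range.mp hi
    have hdiff : |u (i + 1) - u i - (v (i + 1) - v i)| ≤ 2 * η := by
      have h₁ := huv (i + 1) hi
      have h₀ := huv i hi.le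
      rw [abs_le] at h₀ h₁ ⊢
      constructor <;> linarith
    rw [← mul_sub, abs_mul]
    exact mul_le_mul (hc i hi) hdiff (abs_nonneg _) ((abs_nonneg _).trans (hc i hi))
  calc _ = |∑ i ∈ Finset.range n, (c i * (u (i + 1) - u i) - c i * (v (i + 1) - v i))| := by
        rw [Finset.sum_sub_distrib]
    _ ≤ ∑ i ∈ Finset.range n, M * (2 * η) :=
        (Finset.abs_sum_le_sum_abs _ _).trans (Finset.sum_le_sum hterm)
    _ = n * (M * (2 * η)) := by simp

theorem abs_setIntegral_Ioc_sub_setIntegral_Ioc_le {μ ν : Measure ℝ} [IsLocallyFiniteMeasure μ]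
    [IsLocallyFiniteMeasure ν] {h : ℝ → ℝ} (hh : Continuous h) {b : ℕ → ℝ} (hb : Monotone b)
    {n : ℕ} {ω M η : ℝ} (hω : ∀ i < n, ∀ s ∈ Ioc (b i) (b (i + 1)), |h s - h (b i)| ≤ ω)
    (hM : ∀ i < n, |h (b i)| ≤ M)
    (hμν : ∀ i ≤ n, |μ.real (Ioc (b 0) (b i)) - ν.real (Ioc (b 0) (b i))| ≤ η) :
    |∫ s in Ioc (b 0) (b n), h s ∂μ - ∫ s in Ioc (b 0) (b n), h s ∂ν|
      ≤ ω * (μ.real (Ioc (b 0) (b n)) + ν.real (Ioc (b 0) (b n))) + n * (M * (2 * η)) := by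
  have hsub : ∀ (ρ : Measure ℝ) [IsLocallyFiniteMeasure ρ] (i : ℕ), ρ.real (Ioc (b i) (b (i + 1)))
      = ρ.real (Ioc (b 0) (b (i + 1))) - ρ.real (Ioc (b 0) (b i)) := fun ρ _ i =>
    measureReal_Ioc_eq_sub ρ (hb i.zero_le) (hb i.le_succ)
  have hμ := abs_setIntegral_Ioc_sub_sum_le (μ := μ) hh hb hω
  have hν := abs_setIntegral_Ioc_sub_sum_le (μ := ν) hh hb hω
  have hsum := abs_sum_mul_sub_sub_sum_mul_sub_le (c := fun i => h (b i)) hM hμν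
  simp only [hsub] at hμ hν
  rw [abs_le] at hμ hν hsum ⊢
  constructor <;> linarith [hμ.1, hμ.2, hν.1, hν.2, hsum.1, hsum.2]

-- The mesh bound `(T - a) / n` does not depend on `t`, which makes the estimates uniform in `t`.
theorem exists_monotone_partition_Icc {a t T : ℝ} (hat : a ≤ t) (htT : t ≤ T) {n : ℕ}
    (hn : n ≠ 0) : ∃ b : ℕ → ℝ, Monotone b ∧ b 0 = a ∧ b n = t ∧ (∀ k, b k ∈ Icc a t) ∧
      ∀ k, b (k + 1) - b k ≤ (T - a) / n := by
  have hd : 0 ≤ (T - a) / n := div_nonneg (by linarith) n.cast_nonneg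
  refine ⟨fun k => min (a + k * ((T - a) / n)) t, fun i j hij => ?_, by simpa using hat, ?_,
    fun k => ⟨le_min (by nlinarith [(k.cast_nonneg : (0 : ℝ) ≤ k)]) hat, min_le_right _ _⟩,
    fun k => ?_⟩
  · have : (i : ℝ) ≤ j := Nat.cast_le.mpr hij
    exact min_le_min_right t (by nlinarith)
  · dsimp only
    rw [mul_div_cancel₀ _ (Nat.cast_ne_zero.mpr hn : (n : ℝ) ≠ 0), add_sub_cancel]
    exact min_eq_right htT
  · have := min_le_min_left (a + k * ((T - a) / n) + (T - a) / n) (le_add_of_nonneg_right hd :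
      t ≤ t + (T - a) / n)
    rw [min_add_add_right] at this
    push_cast
    rw [add_mul, one_mul, ← add_assoc]
    linarith

theorem abs_setIntegral_Ioc_sub_setIntegral_Ioc_le_of_mesh {μ ν : Measure ℝ}
    [IsLocallyFiniteMeasure μ] [IsLocallyFiniteMeasure ν] {h : ℝ → ℝ} (hh : Continuous h)
    {a t T ω η M η' : ℝ} {N : ℕ} (hN : N ≠ 0) (ht : t ∈ Icc a T) (hmesh : (T - a) / N < η)
    (hmod : ∀ x ∈ Icc a T, ∀ y ∈ Icc a T, dist x y < η → dist (h x) (h y) < ω)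
    (hM : ∀ x ∈ Icc a T, |h x| ≤ M)
    (hμν : ∀ x ∈ Icc a t, |μ.real (Ioc a x) - ν.real (Ioc a x)| ≤ η') :
    |∫ s in Ioc a t, h s ∂μ - ∫ s in Ioc a t, h s ∂ν|
      ≤ ω * (μ.real (Ioc a t) + ν.real (Ioc a t)) + N * (M * (2 * η')) := by
  obtain ⟨b, hb, hb0, hbN, hbmem, hbstep⟩ := exists_monotone_partition_Icc ht.1 ht.2 hN
  have hbT : ∀ k, b k ∈ Icc a T := fun k => ⟨(hbmem k).1, (hbmem k).2.trans ht.2⟩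
  have hosc : ∀ k < N, ∀ s ∈ Ioc (b k) (b (k + 1)), |h s - h (b k)| ≤ ω := by
    intro k _ s hs
    have hsT : s ∈ Icc a T := ⟨(hbT k).1.trans hs.1.le, hs.2.trans (hbT (k + 1)).2⟩
    refine (hmod s hsT (b k) (hbT k) ?_).le
    rw [Real.dist_eq, abs_of_pos (sub_pos.mpr hs.1)]
    linarith [hbstep k, hs.2]
  have key := abs_setIntegral_Ioc_sub_setIntegral_Ioc_le hh hb hosc (fun k _ => hM _ (hbT k))
    fun k _ => hb0 ▸ hμν (b k) (hbmem k)
  rwa [hb0, hbN] at key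

theorem tendstoUniformlyOn_setIntegral_Ioc {ι : Type*} {l : Filter ι} {μ : ι → Measure ℝ}
    [∀ i, IsLocallyFiniteMeasure (μ i)] {ν : Measure ℝ} [IsLocallyFiniteMeasure ν] {a T : ℝ}
    (hμν : TendstoUniformlyOn (fun i t => (μ i).real (Ioc a t)) (fun t => ν.real (Ioc a t)) l
      (Icc a T))
    {h : ℝ → ℝ} (hh : Continuous h) :
    TendstoUniformlyOn (fun i t => ∫ s in Ioc a t, h s ∂μ i) (fun t => ∫ s in Ioc a t, h s ∂ν) l
      (Icc a T) := by
  rw [Metric.tendstoUniformlyOn_iff]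
  intro δ hδ
  set C := ν.real (Ioc a T) + 1
  have hC : 0 < C := by positivity
  obtain ⟨M, hM⟩ := (isCompact_Icc (a := a) (b := T)).exists_bound_of_continuousOn hh.continuousOn
  set ω := δ / (4 * C)
  obtain ⟨η, hη, hmod⟩ := Metric.uniformContinuousOn_iff.mp
    ((isCompact_Icc (a := a) (b := T)).uniformContinuousOn_of_continuous hh.continuousOn) ω
    (by positivity)
  obtain ⟨n, hn⟩ := exists_nat_gt ((T - a) / η)
  have hmesh : (T - a) / (n + 1 : ℕ) < η := by
    rw [div_lt_iff₀ hη] at hn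
    rw [div_lt_iff₀ (by positivity)]
    push_cast
    nlinarith
  set K := ((n + 1 : ℕ) : ℝ) * |M|
  set η' := δ / (4 * (K + 1))
  filter_upwards [Metric.tendstoUniformlyOn_iff.mp hμν (min 1 η') (by positivity)] with i hi t ht
  have key := abs_setIntegral_Ioc_sub_setIntegral_Ioc_le_of_mesh (μ := μ i) (ν := ν) hh
    n.succ_ne_zero ht hmesh hmod (fun x hx => (hM x hx).trans (le_abs_self M))
    fun x hx => by
      rw [← Real.dist_eq, dist_comm]
      exact (hi x ⟨hx.1, hx.2.trans ht.2⟩).le.trans (min_le_right _ _)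
  have hνt : ν.real (Ioc a t) ≤ ν.real (Ioc a T) :=
    measureReal_mono (Ioc_subset_Ioc_right ht.2) measure_Ioc_lt_top.ne
  have hμt : (μ i).real (Ioc a t) ≤ C := by
    have := (hi t ht).trans_le (min_le_left _ _)
    rw [Real.dist_eq, abs_sub_lt_iff] at this
    linarith
  have hsum : ω * ((μ i).real (Ioc a t) + ν.real (Ioc a t)) ≤ δ / 2 := by
    calc _ ≤ ω * (2 * C) := by gcongr; linarith
      _ = δ / 2 := by simp only [ω]; field_simp; ring
  have hgrid : ((n + 1 : ℕ) : ℝ) * (|M| * (2 * η')) < δ / 2 := by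
    calc _ = δ / 2 * (K / (K + 1)) := by simp only [η', K]; field_simp; ring
      _ < δ / 2 := mul_lt_of_lt_one_right (half_pos hδ)
        ((div_lt_one (by positivity)).mpr (lt_add_one K))
  rw [dist_comm, Real.dist_eq]
  linarith

theorem setIntegral_Ioc_withDensity_ofReal {ρ : ℝ → ℝ} (hρc : Continuous ρ) (hρ : 0 ≤ ρ)
    (h : ℝ → ℝ) {a t : ℝ} (hat : a ≤ t) :
    ∫ s in Ioc a t, h s ∂volume.withDensity (fun s => ENNReal.ofReal (ρ s))
      = ∫ s in a..t, h s * ρ s := by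
  rw [setIntegral_withDensity_eq_setIntegral_toReal_smul hρc.measurable.ennreal_ofReal
    (Eventually.of_forall fun _ => ENNReal.ofReal_lt_top) h measurableSet_Ioc,
    intervalIntegral.integral_of_le hat]
  simp only [ENNReal.toReal_ofReal (hρ _), smul_eq_mul, mul_comm]

theorem tendstoUniformlyOn_integral_mul_of_density {ι : Type*} {l : Filter ι} {ρ : ι → ℝ → ℝ}
    (hρc : ∀ i, Continuous (ρ i)) (hρ : ∀ᶠ i in l, 0 ≤ ρ i) {ν : Measure ℝ}
    [IsLocallyFiniteMeasure ν] {a T : ℝ}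
    (hρν : TendstoUniformlyOn (fun i t => ∫ s in a..t, ρ i s) (fun t => ν.real (Ioc a t)) l
      (Icc a T))
    {h : ℝ → ℝ} (hh : Continuous h) :
    TendstoUniformlyOn (fun i t => ∫ s in a..t, h s * ρ i s) (fun t => ∫ s in Ioc a t, h s ∂ν) l
      (Icc a T) := by
  set μ : ι → Measure ℝ := fun i => volume.withDensity fun s => ENNReal.ofReal (ρ i s)
  have : ∀ i, IsLocallyFiniteMeasure (μ i) := fun i =>
    IsLocallyFiniteMeasure.withDensity_ofReal (hρc i)
  have hdensity : ∀ᶠ i in l, ∀ g : ℝ → ℝ, ∀ t ∈ Icc a T,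
      ∫ s in Ioc a t, g s ∂μ i = ∫ s in a..t, g s * ρ i s := hρ.mono fun i hi g t ht =>
    setIntegral_Ioc_withDensity_ofReal (hρc i) hi g ht.1
  have hμν : TendstoUniformlyOn (fun i t => (μ i).real (Ioc a t)) (fun t => ν.real (Ioc a t)) l
      (Icc a T) := hρν.congr <| hdensity.mono fun i hi t ht => by
    simpa using (hi (fun _ => 1) t ht).symm
  exact (tendstoUniformlyOn_setIntegral_Ioc hμν hh).congr <| hdensity.mono fun i hi => hi h

noncomputable def quadraticTaylorRemainder (f : ℝ → ℝ) (x y : ℝ) : ℝ :=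
  f y - f x - deriv f x * (y - x) - deriv (deriv f) x / 2 * (y - x) ^ 2

theorem abs_sub_sub_mul_le_of_abs_deriv_sub_le {φ : ℝ → ℝ} {a b c M : ℝ}
    (hφ : ∀ u ∈ uIcc a b, DifferentiableAt ℝ φ u) (hM : ∀ u ∈ uIcc a b, |deriv φ u - c| ≤ M) :
    |φ b - φ a - c * (b - a)| ≤ M * |b - a| := by
  have hderiv : ∀ u ∈ uIcc a b, HasDerivAt (fun u => φ u - c * u) (deriv φ u - c) u :=
    fun u hu => ((hφ u hu).hasDerivAt.fun_sub ((hasDerivAt_id' u).const_mul c)).congr_deriv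
      (by ring)
  have key := (convex_uIcc a b).norm_image_sub_le_of_norm_deriv_le
    (fun u hu => (hderiv u hu).differentiableAt)
    (fun u hu => by rw [(hderiv u hu).deriv]; exact hM u hu) left_mem_uIcc right_mem_uIcc
  simp only [Real.norm_eq_abs] at key
  convert key using 2
  ring

theorem ContDiff.abs_quadraticTaylorRemainder_le {f : ℝ → ℝ} (hf : ContDiff ℝ 2 f) {a b M : ℝ}
    (hM : ∀ u ∈ uIcc a b, |deriv (deriv f) u - deriv (deriv f) a| ≤ M) :
    |quadraticTaylorRemainder f a b| ≤ M * (b - a) ^ 2 := by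
  have hf' : Differentiable ℝ f := hf.differentiable (by norm_num)
  have hf'' : Differentiable ℝ (deriv f) := (hf.deriv' (n := 1)).differentiable (by norm_num)
  have hM0 : 0 ≤ M := by simpa using hM a left_mem_uIcc
  have hlin : ∀ u ∈ uIcc a b,
      |deriv f u - deriv f a - deriv (deriv f) a * (u - a)| ≤ M * |b - a| := fun u hu =>
    (abs_sub_sub_mul_le_of_abs_deriv_sub_le (fun v _ => hf''.differentiableAt)
      fun v hv => hM v (uIcc_subset_uIcc_left hu hv)).trans
      (mul_le_mul_of_nonneg_left (abs_sub_left_of_mem_uIcc hu) hM0)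
  set c := deriv (deriv f) a
  have hderiv : ∀ u, HasDerivAt (fun u => f u - c / 2 * (u - a) ^ 2)
      (deriv f u - c * (u - a)) u := fun u =>
    ((hf' u).hasDerivAt.fun_sub ((((hasDerivAt_id' u).sub_const a).fun_pow 2).const_mul
      (c / 2))).congr_deriv (by push_cast; ring)
  have := abs_sub_sub_mul_le_of_abs_deriv_sub_le (c := deriv f a)
    (fun u _ => (hderiv u).differentiableAt) fun u hu => by
      rw [(hderiv u).deriv, sub_right_comm]; exact hlin u hu
  rw [mul_assoc, abs_mul_abs_self, ← sq] at this
  convert this using 2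
  unfold quadraticTaylorRemainder
  ring

theorem ContDiff.exists_abs_quadraticTaylorRemainder_le {f : ℝ → ℝ} (hf : ContDiff ℝ 2 f)
    (p q : ℝ) {ω : ℝ} (hω : 0 < ω) : ∃ δ > 0, ∀ x ∈ Icc p q, ∀ y ∈ Icc p q,
      |y - x| < δ → |quadraticTaylorRemainder f x y| ≤ ω * (y - x) ^ 2 := by
  have hcont : Continuous (deriv (deriv f)) := (hf.deriv' (n := 1)).continuous_deriv le_rfl
  obtain ⟨δ, hδ, hmod⟩ := Metric.uniformContinuousOn_iff.mp
    (isCompact_Icc.uniformContinuousOn_of_continuous hcont.continuousOn) ω hω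
  refine ⟨δ, hδ, fun x hx y hy hxy => hf.abs_quadraticTaylorRemainder_le fun u hu => ?_⟩
  have hu' : u ∈ Icc p q := uIcc_subset_Icc hx hy hu
  exact (hmod u hu' x hx ((abs_sub_left_of_mem_uIcc hu).trans_lt hxy)).le

theorem eventually_abs_quadraticTaylorRemainder_comp_le {X : ℝ → ℝ} (hX : Continuous X)
    {f : ℝ → ℝ} (hf : ContDiff ℝ 2 f) (a b : ℝ) {ω : ℝ} (hω : 0 < ω) :
    ∀ᶠ ε in 𝓝 0, ∀ s ∈ Icc a b,
      |quadraticTaylorRemainder f (X s) (X (s + ε))| ≤ ω * (X (s + ε) - X s) ^ 2 := by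
  obtain ⟨B, hB⟩ := (isCompact_Icc (a := a - 1) (b := b + 1)).exists_bound_of_continuousOn
    hX.continuousOn
  have hXB : ∀ x ∈ Icc (a - 1) (b + 1), X x ∈ Icc (-B) B := fun x hx => abs_le.mp (hB x hx)
  obtain ⟨δ, hδ, htaylor⟩ := hf.exists_abs_quadraticTaylorRemainder_le (-B) B hω
  obtain ⟨η, hη, hmod⟩ := Metric.uniformContinuousOn_iff.mp
    ((isCompact_Icc (a := a - 1) (b := b + 1)).uniformContinuousOn_of_continuous hX.continuousOn)
    δ hδ
  filter_upwards [Metric.ball_mem_nhds 0 (lt_min hη one_pos)] with ε hε s hs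
  rw [Metric.mem_ball, Real.dist_0_eq_abs, lt_min_iff, abs_lt, abs_lt] at hε
  obtain ⟨⟨hεη₁, hεη₂⟩, hε₁, hε₂⟩ := hε
  have hsK : s ∈ Icc (a - 1) (b + 1) := ⟨by linarith [hs.1], by linarith [hs.2]⟩
  have hsεK : s + ε ∈ Icc (a - 1) (b + 1) := ⟨by linarith [hs.1], by linarith [hs.2]⟩
  refine htaylor _ (hXB s hsK) _ (hXB _ hsεK) ?_
  have := hmod _ hsεK s hsK (by rw [Real.dist_eq, add_sub_cancel_left, abs_lt]; exact ⟨hεη₁, hεη₂⟩)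
  rwa [Real.dist_eq] at this

theorem tendstoUniformlyOn_integral_quadraticTaylorRemainder_div {X : ℝ → ℝ} (hX : Continuous X)
    {f : ℝ → ℝ} (hf : ContDiff ℝ 2 f) {T C : ℝ} (hC : ∀ᶠ ε in 𝓝[>] 0, Ccov ε X X T ≤ C) :
    TendstoUniformlyOn
      (fun ε t => ∫ s in (0 : ℝ)..t, quadraticTaylorRemainder f (X s) (X (s + ε)) / ε)
      (fun _ => 0) (𝓝[>] 0) (Icc 0 T) := by
  rw [Metric.tendstoUniformlyOn_iff]
  intro δ hδ
  set ω := δ / (|C| + 1)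
  have hω : 0 < ω := by positivity
  filter_upwards [hC, self_mem_nhdsWithin, nhdsWithin_le_nhds
    (eventually_abs_quadraticTaylorRemainder_comp_le hX hf 0 T hω)] with ε hεC (hε : 0 < ε) hR t ht
  set ρ := fun s => (X (s + ε) - X s) * (X (s + ε) - X s) / ε
  have hρc : Continuous ρ := by fun_prop
  have hρ : ∀ s, 0 ≤ ρ s := fun s => div_nonneg (mul_self_nonneg _) hε.le
  have hpointwise :
      ∀ s ∈ Ioc 0 t, ‖quadraticTaylorRemainder f (X s) (X (s + ε)) / ε‖ ≤ ω * ρ s := by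
    intro s hs
    rw [Real.norm_eq_abs, abs_div, abs_of_pos hε, div_le_iff₀ hε]
    calc _ ≤ ω * (X (s + ε) - X s) ^ 2 := hR s ⟨hs.1.le, hs.2.trans ht.2⟩
      _ = ω * ρ s * ε := by simp only [ρ]; field_simp
  have hmono : ∫ s in (0 : ℝ)..t, ρ s ≤ Ccov ε X X T :=
    intervalIntegral.integral_mono_interval le_rfl ht.1 ht.2 (Eventually.of_forall hρ)
      (hρc.intervalIntegrable _ _)
  have hint := intervalIntegral.norm_integral_le_of_norm_le (μ := volume) ht.1
    (Eventually.of_forall hpointwise) ((hρc.const_mul ω).intervalIntegrable _ _)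
  rw [intervalIntegral.integral_const_mul] at hint
  rw [dist_zero_left]
  calc _ ≤ ω * C := hint.trans (mul_le_mul_of_nonneg_left (hmono.trans hεC) hω.le)
    _ ≤ ω * |C| := mul_le_mul_of_nonneg_left (le_abs_self C) hω.le
    _ < δ := by simp only [ω]; rw [div_mul_eq_mul_div, div_lt_iff₀ (by positivity)]; linarith

theorem StieltjesFunction.measureReal_Ioc (Q : StieltjesFunction ℝ) {a b : ℝ} (hab : a ≤ b) :
    Q.measure.real (Ioc a b) = Q b - Q a := by
  rw [measureReal_def, Q.measure_Ioc, ENNReal.toReal_ofReal (sub_nonneg.mpr (Q.mono hab))]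

theorem integral_deriv_comp_mul_sub_div_eq {X : ℝ → ℝ} (hX : Continuous X) {f : ℝ → ℝ}
    (hf : ContDiff ℝ 2 f) (ε t : ℝ) :
    ∫ s in (0 : ℝ)..t, deriv f (X s) * (X (s + ε) - X s) / ε
      = ((∫ s in (0 : ℝ)..t, (f (X (s + ε)) - f (X s)) / ε)
        - ∫ s in (0 : ℝ)..t,
            deriv (deriv f) (X s) / 2 * ((X (s + ε) - X s) * (X (s + ε) - X s) / ε))
        - ∫ s in (0 : ℝ)..t, quadraticTaylorRemainder f (X s) (X (s + ε)) / ε := by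
  have hf₀ := hf.continuous
  have hf₁ : Continuous (deriv f) := hf.continuous_deriv one_le_two
  have hf₂ : Continuous (deriv (deriv f)) := (hf.deriv' (n := 1)).continuous_deriv le_rfl
  have hi : ∀ {g : ℝ → ℝ}, Continuous g → IntervalIntegrable g volume 0 t :=
    fun hg => hg.intervalIntegrable _ _
  simp only [quadraticTaylorRemainder]
  rw [← intervalIntegral.integral_sub (hi (by fun_prop)) (hi (by fun_prop)),
    ← intervalIntegral.integral_sub (hi (by fun_prop)) (hi (by fun_prop))]
  refine intervalIntegral.integral_congr fun s _ => ?_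
  ring

theorem stmt18_general (T : ℝ) (hT : 0 < T) (X : ℝ → ℝ)
    (hXc : Continuous X)
    (Q : StieltjesFunction ℝ) (hQ0 : Q 0 = 0)
    (hQV : TendstoUniformlyOn (fun ε t => Ccov ε X X t) Q
      (nhdsWithin 0 (Set.Ioi 0)) (Set.Icc 0 T))
    (f : ℝ → ℝ) (hf : ContDiff ℝ 2 f) :
    TendstoUniformlyOn
      (fun ε t => ∫ s in (0:ℝ)..t, deriv f (X s) * (X (s + ε) - X s) / ε)
      (fun t => f (X t) - f (X 0) -
        (1 / 2) * ∫ s in Set.Ioc (0:ℝ) t, deriv (deriv f) (X s) ∂Q.measure)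
      (nhdsWithin 0 (Set.Ioi 0)) (Set.Icc 0 T) := by
  have hf₂ : Continuous (deriv (deriv f)) := (hf.deriv' (n := 1)).continuous_deriv le_rfl
  have hQ : TendstoUniformlyOn (fun ε t => Ccov ε X X t) (fun t => Q.measure.real (Ioc 0 t))
      (𝓝[>] 0) (Icc 0 T) :=
    hQV.congr_right fun t ht => by rw [Q.measureReal_Ioc ht.1, hQ0, sub_zero]
  have hQT : ∀ᶠ ε in 𝓝[>] 0, Ccov ε X X T ≤ Q T + 1 :=
    ((hQV.tendsto_at ⟨hT.le, le_rfl⟩).eventually (gt_mem_nhds (lt_add_one _))).mono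
      fun _ => le_of_lt
  have hdiff := tendstoUniformlyOn_integral_forwardDifference_div (hf.continuous.comp hXc) 0 T
  have hquad := tendstoUniformlyOn_integral_mul_of_density
    (ρ := fun ε s => (X (s + ε) - X s) * (X (s + ε) - X s) / ε) (fun ε => by fun_prop)
    (eventually_mem_nhdsWithin.mono fun ε (hε : 0 < ε) s => div_nonneg (mul_self_nonneg _) hε.le)
    hQ (h := fun s => deriv (deriv f) (X s) / 2) (by fun_prop)
  have hrem := tendstoUniformlyOn_integral_quadraticTaylorRemainder_div hXc hf hQT
  refine (((hdiff.sub hquad).sub hrem).congr ?_).congr_right fun t _ => ?_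
  · exact Eventually.of_forall fun ε t _ => (integral_deriv_comp_mul_sub_div_eq hXc hf ε t).symm
  · simp only [Pi.sub_apply, Function.comp_apply, integral_div]
    ring

/-- deterministic C² Itô formula: if `X` is continuous with finite
quadratic variation `[X,X]` (the continuous increasing Stieltjes function `Q`) and
`f ∈ C²(ℝ)`, then the forward integral `∫₀ᵗ f'(X) d⁻X` exists (uniformly in `t`) and
`f(X_t) = f(X₀) + ∫₀ᵗ f'(X) d⁻X + ½ ∫₀ᵗ f''(X_s) d[X,X]_s`. -/
theorem stmt18 (T : ℝ) (hT : 0 < T) (X : ℝ → ℝ)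
    (hXc : Continuous X) (hXe : ExtConst T X)
    (Q : StieltjesFunction ℝ) (hQc : Continuous Q) (hQ0 : Q 0 = 0)
    (hQV : TendstoUniformlyOn (fun ε t => Ccov ε X X t) Q
      (nhdsWithin 0 (Set.Ioi 0)) (Set.Icc 0 T))
    (f : ℝ → ℝ) (hf : ContDiff ℝ 2 f) :
    TendstoUniformlyOn
      (fun ε t => ∫ s in (0:ℝ)..t, deriv f (X s) * (X (s + ε) - X s) / ε)
      (fun t => f (X t) - f (X 0) -
        (1 / 2) * ∫ s in Set.Ioc (0:ℝ) t, deriv (deriv f) (X s) ∂Q.measure)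
      (nhdsWithin 0 (Set.Ioi 0)) (Set.Icc 0 T) :=
  stmt18_general T hT X hXc Q hQ0 hQV f hf
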